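/- arXiv:1402.0080 — 4 statements merged into one kernel-verified Lean document; each statement's English description precedes it below -/
import Mathlib

section
/- Let A be a homogeneous set with measure μ. Then for every x ∈ A, |log N(A,r)/(−log r) − log μ(B(x,r))/log r| = O(1/|log r|) as r → 0; that is, the function f_A(r) = log N(A,r)/(−log r) is equivalent to α_A(x,r) for every x ∈ A. -/
open scoped ENNReal

noncomputable section

open Filter MeasureTheory

/-- A compact set `A` is *homogeneous* with respect to the Borel probability measure `μ`
supported on `A` and constants `lam ≥ 1`, `kappa ∈ (0,1)`, `1 < del ≤ Del`. -/
structure IsHomog {X : Type*} [MetricSpace X] [MeasurableSpace X]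
    (A : Set X) (μ : Measure X) (lam kappa del Del : ℝ) : Prop where
  compact : IsCompact A
  diam_pos : 0 < Metric.diam A
  prob : IsProbabilityMeasure μ
  supp_null : μ Aᶜ = 0
  supp_pos : ∀ x ∈ A, ∀ r : ℝ, 0 < r → 0 < μ (Metric.closedBall x r)
  one_le_lam : 1 ≤ lam
  ratio_le : ∀ x₁ ∈ A, ∀ x₂ ∈ A, ∀ r : ℝ, 0 < r → r ≤ Metric.diam A →
    (μ (Metric.closedBall x₁ r)).toReal ≤ lam * (μ (Metric.closedBall x₂ r)).toReal
  kappa_pos : 0 < kappa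
  kappa_lt_one : kappa < 1
  one_lt_del : 1 < del
  del_le_Del : del ≤ Del
  scale_lower : ∀ x ∈ A, ∀ r : ℝ, 0 < r → r ≤ Metric.diam A →
    del * (μ (Metric.closedBall x (kappa * r))).toReal ≤ (μ (Metric.closedBall x r)).toReal
  scale_upper : ∀ x ∈ A, ∀ r : ℝ, 0 < r → r ≤ Metric.diam A →
    (μ (Metric.closedBall x r)).toReal ≤ Del * (μ (Metric.closedBall x (kappa * r))).toReal

/-- `alphaPt μ x r = log μ(B(x,r)) / log r`. -/
def alphaPt {X : Type*} [MetricSpace X] [MeasurableSpace X]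
    (μ : Measure X) (x : X) (r : ℝ) : ℝ :=
  Real.log (μ (Metric.closedBall x r)).toReal / Real.log r

/-- `g ∼ h` : `|h r - g r| = O(1/|log r|)` as `r → 0⁺`. -/
def EquivNearZero (g h : ℝ → ℝ) : Prop :=
  ∃ C : ℝ, 0 < C ∧ ∃ δ : ℝ, 0 < δ ∧ ∀ r : ℝ, 0 < r → r < δ → |h r - g r| ≤ C / |Real.log r|

/-- `g` is a representative of the equivalence class `[α_A(x,·)]` of the homogeneous set `A`. -/
def IsAlphaRep {X : Type*} [MetricSpace X] [MeasurableSpace X]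
    (A : Set X) (μ : Measure X) (g : ℝ → ℝ) : Prop :=
  ∃ x ∈ A, EquivNearZero g (fun r => alphaPt μ x r)

/-- `χ(A,B)` computed from representatives `g` of `[α_A]` and `h` of `[α_B]`. -/
def chiFun (g h : ℝ → ℝ) : ℝ :=
  Filter.limsup (fun r => |Real.log (g r / h r)|) (nhdsWithin (0 : ℝ) (Set.Ioi 0))

/-- `N(A,r)`: the smallest number of closed balls of radius `r` needed to cover `A`. -/
def coverNum {X : Type*} [MetricSpace X] (A : Set X) (r : ℝ) : ℕ :=
  sInf {m : ℕ | ∃ s : Finset X, s.card = m ∧ A ⊆ ⋃ x ∈ s, Metric.closedBall x r}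

/-- Lower box-counting dimension. -/
def lowerBoxDim {X : Type*} [MetricSpace X] (A : Set X) : ℝ :=
  Filter.liminf (fun r : ℝ => Real.log (coverNum A r : ℝ) / (-Real.log r))
    (nhdsWithin (0 : ℝ) (Set.Ioi 0))

/-- Upper box-counting dimension. -/
def upperBoxDim {X : Type*} [MetricSpace X] (A : Set X) : ℝ :=
  Filter.limsup (fun r : ℝ => Real.log (coverNum A r : ℝ) / (-Real.log r))
    (nhdsWithin (0 : ℝ) (Set.Ioi 0))

/-- Radius-based packing premeasure. -/
def packPre {X : Type*} [MetricSpace X] (A : Set X) (s : ℝ) : ℝ≥0∞ :=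
  ⨅ (δ : ℝ) (_ : 0 < δ),
    ⨆ (m : ℕ) (x : Fin m → X) (ρ : Fin m → ℝ) (_ : ∀ i, x i ∈ A)
      (_ : ∀ i, 0 < ρ i ∧ ρ i ≤ δ)
      (_ : ∀ i j, i ≠ j →
        Disjoint (Metric.closedBall (x i) (ρ i)) (Metric.closedBall (x j) (ρ j))),
      ∑ i, ENNReal.ofReal (ρ i ^ s)

/-- Radius-based packing measure. -/
def packMeasure {X : Type*} [MetricSpace X] (A : Set X) (s : ℝ) : ℝ≥0∞ :=
  ⨅ (F : ℕ → Set X) (_ : A ⊆ ⋃ m, F m), ∑' m, packPre (F m) s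

/-- Radius-based packing dimension. -/
def packDim {X : Type*} [MetricSpace X] (A : Set X) : ℝ :=
  sInf {s : ℝ | 0 ≤ s ∧ packMeasure A s = 0}

/-- Distance between two sets, valued in `ℝ≥0∞`. -/
def setDistE {X : Type*} [MetricSpace X] (E F : Set X) : ℝ≥0∞ :=
  ⨅ (a : X) (_ : a ∈ E) (b : X) (_ : b ∈ F), edist a b

/-- Uniformly disconnected set. -/
def UnifDisconn {X : Type*} [MetricSpace X] (A : Set X) : Prop :=
  ∃ C : ℝ, 1 < C ∧ ∃ rstar : ℝ, 0 < rstar ∧ ∀ x ∈ A, ∀ r : ℝ, 0 < r → r < rstar →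
    ∃ E : Set X, E ⊆ A ∧ A ∩ Metric.closedBall x r ⊆ E ∧
      E ⊆ Metric.closedBall x (C * r) ∧ ENNReal.ofReal r < setDistE E (A \ E)

/-- `A` can be bilipschitz embedded into `B`. -/
def BilipEmbed {X Y : Type*} [MetricSpace X] [MetricSpace Y] (A : Set X) (B : Set Y) : Prop :=
  ∃ (f : X → Y) (L : ℝ), 1 ≤ L ∧ Set.MapsTo f A B ∧ Set.InjOn f A ∧
    ∀ x₁ ∈ A, ∀ x₂ ∈ A,
      dist x₁ x₂ / L ≤ dist (f x₁) (f x₂) ∧ dist (f x₁) (f x₂) ≤ L * dist x₁ x₂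

/-- `A` and `B` are bilipschitz equivalent. -/
def BilipEquivSets {X Y : Type*} [MetricSpace X] [MetricSpace Y] (A : Set X) (B : Set Y) :
    Prop :=
  ∃ (f : X → Y) (L : ℝ), 1 ≤ L ∧ Set.BijOn f A B ∧
    ∀ x₁ ∈ A, ∀ x₂ ∈ A,
      dist x₁ x₂ / L ≤ dist (f x₁) (f x₂) ∧ dist (f x₁) (f x₂) ≤ L * dist x₁ x₂

/-- `A` and `B` are quasi-Lipschitz equivalent. -/
def QuasiLipEquiv {X Y : Type*} [MetricSpace X] [MetricSpace Y] (A : Set X) (B : Set Y) : Prop :=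
  ∃ f : X → Y, Set.BijOn f A B ∧
    ∀ ε : ℝ, 0 < ε → ∃ δ : ℝ, 0 < δ ∧ ∀ x₁ ∈ A, ∀ x₂ ∈ A,
      0 < dist x₁ x₂ → dist x₁ x₂ < δ →
      |Real.log (dist (f x₁) (f x₂)) / Real.log (dist x₁ x₂) - 1| < ε

/-- Ahlfors–David `s`-regular set. -/
def IsADRegular {X : Type*} [MetricSpace X] [MeasurableSpace X] (A : Set X) (s : ℝ) : Prop :=
  IsCompact A ∧ 0 < Metric.diam A ∧
    ∃ (μ : Measure X) (c : ℝ), 1 ≤ c ∧ μ Aᶜ = 0 ∧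
      ∀ x ∈ A, ∀ r : ℝ, 0 < r → r ≤ Metric.diam A →
        ENNReal.ofReal (c⁻¹ * r ^ s) ≤ μ (Metric.closedBall x r) ∧
          μ (Metric.closedBall x r) ≤ ENNReal.ofReal (c * r ^ s)

/-- `n₁ ⋯ n_k` (with `0`-based indexing of the sequence `n`). -/
def prodN (n : ℕ → ℕ) (k : ℕ) : ℕ := ∏ i ∈ Finset.range k, n i

/-- `c₁ ⋯ c_k` (with `0`-based indexing of the sequence `c`). -/
def prodC (c : ℕ → ℝ) (k : ℕ) : ℝ := ∏ i ∈ Finset.range k, c i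

/-- Admissible word for the branching sequence `n`. -/
def AdmWord (n : ℕ → ℕ) (w : List ℕ) : Prop := ∀ i : Fin w.length, w.get i < n i.val

/-- A Moran structure on `J ⊆ ℝ^d` with branching numbers `n` and ratios `c`:
`Jw w` is the basic set indexed by the word `w`. -/
structure IsMoranSystem {d : ℕ} (J : Set (EuclideanSpace ℝ (Fin d))) (n : ℕ → ℕ)
    (c : ℕ → ℝ) (Jw : List ℕ → Set (EuclideanSpace ℝ (Fin d))) : Prop where
  compact : IsCompact J
  int_nonempty : (interior J).Nonempty
  two_le_n : ∀ k, 2 ≤ n k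
  c_pos : ∀ k, 0 < c k
  c_lt_one : ∀ k, c k < 1
  c_inf_pos : ∃ c₀ : ℝ, 0 < c₀ ∧ ∀ k, c₀ ≤ c k
  root : Jw [] = J
  subset : ∀ w : List ℕ, AdmWord n w → ∀ i : ℕ, i < n w.length → Jw (w ++ [i]) ⊆ Jw w
  similar : ∀ w : List ℕ, AdmWord n w → ∀ i : ℕ, i < n w.length →
    ∃ S : EuclideanSpace ℝ (Fin d) → EuclideanSpace ℝ (Fin d),
      (∀ x y, dist (S x) (S y) = c w.length * dist x y) ∧ Jw (w ++ [i]) = S '' Jw w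
  disj_int : ∀ w : List ℕ, AdmWord n w → ∀ i : ℕ, i < n w.length → ∀ j : ℕ, j < n w.length →
    i ≠ j → Disjoint (interior (Jw (w ++ [i]))) (interior (Jw (w ++ [j])))

/-- The Moran set determined by the family `Jw`. -/
def moranSet {d : ℕ} (n : ℕ → ℕ) (Jw : List ℕ → Set (EuclideanSpace ℝ (Fin d))) :
    Set (EuclideanSpace ℝ (Fin d)) :=
  ⋂ k : ℕ, ⋃ (w : List ℕ) (_ : w.length = k ∧ AdmWord n w), Jw w

/-- The index `k` such that `(c₁⋯c_k)·D < r ≤ (c₁⋯c_{k-1})·D`. -/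
def levelOf (c : ℕ → ℝ) (D r : ℝ) : ℕ := sInf {k : ℕ | prodC c k * D < r}

/-- `Φ(r) = n₁⋯n_k` whenever `(c₁⋯c_k)·D < r ≤ (c₁⋯c_{k-1})·D`, where `D = |J|`. -/
def Phi (n : ℕ → ℕ) (c : ℕ → ℝ) (D r : ℝ) : ℕ := prodN n (levelOf c D r)

/-!
Fix `x ∈ A` and a small radius `r`, and write `m(r) = μ(B(x,r))`. By the homogeneity of `μ`
every ball centred in `A` has measure comparable to `m(r)`, and iterating the upper scaling
bound shows that `μ` is doubling on `A`. A cover of `A` by `N(A,r)` balls of radius `r` carries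
the full mass `1`, so `N(A,r) · m(r) ≳ 1`; a maximal `r`-separated subset of `A` is a cover of
size at least `N(A,r)` whose balls of radius `r/2` are disjoint, so `N(A,r) · m(r) ≲ 1`. Hence
`log N(A,r) + log m(r)` stays bounded, and dividing by `|log r|` gives the claim.
-/

open Metric

section CoverNum

variable {X : Type*} [MetricSpace X] {A : Set X} {r : ℝ}

lemma coverNum_le_card {s : Finset X} (h : A ⊆ ⋃ y ∈ s, closedBall y r) :
    coverNum A r ≤ s.card :=
  Nat.sInf_le ⟨s, rfl, h⟩

lemma exists_cover_card_eq_coverNum (hA : IsCompact A) (hr : 0 < r) :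
    ∃ s : Finset X, s.card = coverNum A r ∧ A ⊆ ⋃ y ∈ s, closedBall y r := by
  obtain ⟨t, ht⟩ := hA.elim_finite_subcover (fun a : X => ball a r) (fun _ => isOpen_ball)
    fun a _ => Set.mem_iUnion.mpr ⟨a, mem_ball_self hr⟩
  have hmem : coverNum A r ∈
      {m : ℕ | ∃ s : Finset X, s.card = m ∧ A ⊆ ⋃ y ∈ s, closedBall y r} :=
    Nat.sInf_mem ⟨t.card, t, rfl, ht.trans (Set.iUnion₂_mono fun _ _ => ball_subset_closedBall)⟩
  exact hmem

/-- A maximal `r`-separated subset of `A` covers `A` by balls of radius `r`. -/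
lemma coverNum_le_of_separated_card_le (hr : 0 ≤ r) {n : ℕ}
    (h : ∀ s : Finset X, ↑s ⊆ A → (s : Set X).Pairwise (fun y z => r < dist y z) → s.card ≤ n) :
    coverNum A r ≤ n := by
  classical
  let IsSeparatedCard : ℕ → Prop := fun k => ∃ s : Finset X,
    ↑s ⊆ A ∧ (s : Set X).Pairwise (fun y z => r < dist y z) ∧ s.card = k
  obtain ⟨s, hsA, hsep, hcard⟩ : IsSeparatedCard (Nat.findGreatest IsSeparatedCard n) :=
    Nat.findGreatest_spec n.zero_le ⟨∅, by simp, by simp, rfl⟩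
  refine (coverNum_le_card (s := s) fun a ha => ?_).trans (hcard ▸ Nat.findGreatest_le n)
  by_contra hfar
  simp only [Set.mem_iUnion, mem_closedBall, not_exists, not_le] at hfar
  have has : a ∉ s := fun has => by simpa using (hfar a has).trans_le' hr
  have hins : IsSeparatedCard (s.card + 1) := by
    refine ⟨insert a s, ?_, ?_, Finset.card_insert_of_notMem has⟩
    · rw [Finset.coe_insert]
      exact Set.insert_subset ha hsA
    · rw [Finset.coe_insert, Set.pairwise_insert]
      exact ⟨hsep, fun b hb _ => ⟨hfar b hb, (hfar b hb).trans_eq (dist_comm a b)⟩⟩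
  obtain ⟨t, htA, htsep, htcard⟩ := hins
  have hle : s.card + 1 ≤ Nat.findGreatest IsSeparatedCard n :=
    Nat.le_findGreatest (htcard ▸ h t htA htsep) ⟨t, htA, htsep, htcard⟩
  omega

end CoverNum

section MeasureOfBalls

open MeasureTheory

variable {X : Type*} [MetricSpace X] [MeasurableSpace X] {μ : Measure X} [IsProbabilityMeasure μ]
  {A : Set X} {r c : ℝ} {s : Finset X}

lemma one_le_card_mul_of_cover (hA : μ Aᶜ = 0) (hcov : A ⊆ ⋃ y ∈ s, closedBall y r)
    (hc : ∀ y ∈ s, μ.real (closedBall y r) ≤ c) : 1 ≤ s.card * c := by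
  have hAc : μ.real Aᶜ = 0 := by simp [Measure.real, hA]
  calc (1 : ℝ) = μ.real (A ∪ Aᶜ) := by simp
    _ ≤ μ.real A := by simpa [hAc] using measureReal_union_le (μ := μ) A Aᶜ
    _ ≤ μ.real (⋃ y ∈ s, closedBall y r) := measureReal_mono hcov (measure_ne_top μ _)
    _ ≤ ∑ y ∈ s, μ.real (closedBall y r) := measureReal_biUnion_finset_le s _
    _ ≤ s.card * c := by simpa using Finset.sum_le_card_nsmul s _ c hc

lemma card_mul_le_one_of_separated [OpensMeasurableSpace X]
    (hsep : (s : Set X).Pairwise (fun y z => r < dist y z))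
    (hc : ∀ y ∈ s, c ≤ μ.real (closedBall y (r / 2))) : s.card * c ≤ 1 := by
  have hdisj : (s : Set X).PairwiseDisjoint (fun y => closedBall y (r / 2)) :=
    fun y hy z hz hyz => closedBall_disjoint_closedBall (by linarith [hsep hy hz hyz])
  calc s.card * c ≤ ∑ y ∈ s, μ.real (closedBall y (r / 2)) := by
        simpa using Finset.card_nsmul_le_sum s _ c hc
    _ = μ.real (⋃ y ∈ s, closedBall y (r / 2)) :=
        (measureReal_biUnion_finset hdisj fun _ _ => measurableSet_closedBall).symm
    _ ≤ 1 := measureReal_le_one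

end MeasureOfBalls

def IsDoublingOn {X : Type*} [MetricSpace X] [MeasurableSpace X] (μ : Measure X) (A : Set X)
    (K : ℝ) : Prop :=
  ∀ x ∈ A, ∀ t, 0 < t → 2 * t ≤ diam A →
    μ.real (closedBall x (2 * t)) ≤ K * μ.real (closedBall x t)

namespace IsHomog

open MeasureTheory

variable {X : Type*} [MetricSpace X] [MeasurableSpace X] {A : Set X} {μ : Measure X}
  {lam kappa del Del : ℝ} {x : X} {r t K : ℝ}

lemma one_le_Del (hA : IsHomog A μ lam kappa del Del) : 1 ≤ Del :=
  hA.one_lt_del.le.trans hA.del_le_Del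

lemma measureReal_closedBall_pos (hA : IsHomog A μ lam kappa del Del) (hx : x ∈ A)
    (ht : 0 < t) : 0 < μ.real (closedBall x t) :=
  have := hA.prob
  ENNReal.toReal_pos (hA.supp_pos x hx t ht).ne' (measure_ne_top μ _)

lemma measureReal_closedBall_le_pow_mul (hA : IsHomog A μ lam kappa del Del) (hx : x ∈ A)
    (j : ℕ) (ht : 0 < t) (htD : t ≤ diam A) :
    μ.real (closedBall x t) ≤ Del ^ j * μ.real (closedBall x (kappa ^ j * t)) := by
  induction j generalizing t with
  | zero => simp
  | succ j ih =>
    have hκt : kappa * t ≤ t := mul_le_of_le_one_left ht.le hA.kappa_lt_one.le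
    have hDel : 0 ≤ Del := zero_le_one.trans hA.one_le_Del
    calc μ.real (closedBall x t) ≤ Del * μ.real (closedBall x (kappa * t)) :=
          hA.scale_upper x hx t ht htD
      _ ≤ Del * (Del ^ j * μ.real (closedBall x (kappa ^ j * (kappa * t)))) := by
          gcongr
          exact ih (mul_pos hA.kappa_pos ht) (hκt.trans htD)
      _ = Del ^ (j + 1) * μ.real (closedBall x (kappa ^ (j + 1) * t)) := by ring_nf

/-- `μ` is doubling at scales below `diam A`: `2t` shrinks below `t` after `n` steps `t ↦ κ t`
as soon as `κⁿ < 1/2`. -/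
lemma exists_doubling (hA : IsHomog A μ lam kappa del Del) :
    ∃ K, IsDoublingOn μ A K := by
  obtain ⟨n, hn⟩ := exists_pow_lt_of_lt_one (by norm_num : (0 : ℝ) < 1 / 2) hA.kappa_lt_one
  refine ⟨Del ^ n, fun x hx t ht h2t => ?_⟩
  have hshrink : kappa ^ n * (2 * t) ≤ t := by nlinarith
  calc μ.real (closedBall x (2 * t))
      ≤ Del ^ n * μ.real (closedBall x (kappa ^ n * (2 * t))) :=
        hA.measureReal_closedBall_le_pow_mul hx n (by linarith) h2t
    _ ≤ Del ^ n * μ.real (closedBall x t) := by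
        have := hA.prob
        gcongr
        · exact pow_nonneg (zero_le_one.trans hA.one_le_Del) n
        · exact measure_ne_top μ _

lemma doubling_const_pos (hA : IsHomog A μ lam kappa del Del) (hK : IsDoublingOn μ A K)
    (hx : x ∈ A) : 0 < K := by
  have hD := hA.diam_pos
  have hpos := hA.measureReal_closedBall_pos hx (half_pos hD)
  refine (mul_pos_iff_of_pos_right hpos).mp ((hA.measureReal_closedBall_pos hx hD).trans_le ?_)
  have h := hK x hx _ (half_pos hD) (by linarith)
  rwa [mul_div_cancel₀ _ two_ne_zero] at h

/-- A ball meeting `A` lies in a ball of twice the radius centred in `A`; other balls are null. -/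
lemma measureReal_closedBall_le (hA : IsHomog A μ lam kappa del Del)
    (hK : IsDoublingOn μ A K) (hx : x ∈ A) (hr : 0 < r) (h2r : 2 * r ≤ diam A) (y : X) :
    μ.real (closedBall y r) ≤ lam * K * μ.real (closedBall x r) := by
  have := hA.prob
  have hK0 := hA.doubling_const_pos hK hx
  have hlam0 : 0 < lam := zero_lt_one.trans_le hA.one_le_lam
  by_cases hmeet : (closedBall y r ∩ A).Nonempty
  · obtain ⟨a, hay, haA⟩ := hmeet
    have hsub : closedBall y r ⊆ closedBall a (2 * r) :=
      closedBall_subset_closedBall' (by linarith [mem_closedBall'.mp hay])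
    calc μ.real (closedBall y r) ≤ μ.real (closedBall a (2 * r)) := measureReal_mono hsub
      _ ≤ lam * μ.real (closedBall x (2 * r)) := hA.ratio_le a haA x hx _ (by linarith) h2r
      _ ≤ lam * (K * μ.real (closedBall x r)) := by gcongr; exact hK x hx r hr h2r
      _ = lam * K * μ.real (closedBall x r) := by ring
  · have hnull : μ (closedBall y r) = 0 :=
      measure_mono_null (fun z hz hzA => hmeet ⟨z, hz, hzA⟩) hA.supp_null
    rw [Measure.real, hnull, ENNReal.toReal_zero]
    positivity

lemma inv_le_coverNum_mul (hA : IsHomog A μ lam kappa del Del) (hK : IsDoublingOn μ A K)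
    (hx : x ∈ A) (hr : 0 < r) (h2r : 2 * r ≤ diam A) :
    (lam * K)⁻¹ ≤ coverNum A r * μ.real (closedBall x r) := by
  have := hA.prob
  obtain ⟨s, hcard, hcov⟩ := exists_cover_card_eq_coverNum hA.compact hr
  have hone := one_le_card_mul_of_cover hA.supp_null hcov
    fun y _ => hA.measureReal_closedBall_le hK hx hr h2r y
  have hC : 0 < lam * K :=
    mul_pos (zero_lt_one.trans_le hA.one_le_lam) (hA.doubling_const_pos hK hx)
  rw [inv_le_iff_one_le_mul₀ hC, ← hcard]
  linarith

lemma coverNum_mul_le [OpensMeasurableSpace X] (hA : IsHomog A μ lam kappa del Del)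
    (hK : IsDoublingOn μ A K) (hx : x ∈ A) (hr : 0 < r) (h2r : 2 * r ≤ diam A) :
    coverNum A r * μ.real (closedBall x r) ≤ lam * K := by
  have := hA.prob
  have hlam : 0 < lam := zero_lt_one.trans_le hA.one_le_lam
  have hm := hA.measureReal_closedBall_pos hx (half_pos hr)
  have hN : (coverNum A r : ℝ) ≤ lam / μ.real (closedBall x (r / 2)) := by
    refine (Nat.le_floor_iff (by positivity)).mp
      (coverNum_le_of_separated_card_le hr.le fun s hsA hsep => Nat.le_floor ?_)
    have hsmall : ∀ y ∈ s, μ.real (closedBall x (r / 2)) / lam ≤ μ.real (closedBall y (r / 2)) :=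
      fun y hy => (div_le_iff₀' hlam).mpr
        (hA.ratio_le x hx y (hsA hy) _ (half_pos hr) (by linarith))
    have hcard := card_mul_le_one_of_separated hsep hsmall
    rw [mul_div_assoc', div_le_one hlam] at hcard
    rwa [le_div_iff₀ hm]
  have hdoubling : μ.real (closedBall x r) ≤ K * μ.real (closedBall x (r / 2)) := by
    have h := hK x hx (r / 2) (half_pos hr) (by linarith)
    rwa [mul_div_cancel₀ _ two_ne_zero] at h
  calc (coverNum A r : ℝ) * μ.real (closedBall x r)
      ≤ lam / μ.real (closedBall x (r / 2)) * (K * μ.real (closedBall x (r / 2))) :=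
        mul_le_mul hN hdoubling measureReal_nonneg (by positivity)
    _ = lam * K := by field_simp

end IsHomog

open Real in
lemma equivNearZero_of_mul_mem_Icc {N m : ℝ → ℝ} {C δ : ℝ} (hC : 0 < C) (hδ : 0 < δ)
    (h : ∀ r, 0 < r → r < δ → N r * m r ∈ Set.Icc C⁻¹ C) :
    EquivNearZero (fun r => log (N r) / (-log r)) (fun r => log (m r) / log r) := by
  refine ⟨|log C| + 1, by positivity, min δ 1, lt_min hδ one_pos, fun r hr hrδ => ?_⟩
  obtain ⟨hlo, hhi⟩ := h r hr (hrδ.trans_le (min_le_left _ _))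
  have hlogr : log r ≠ 0 := (log_neg hr (hrδ.trans_le (min_le_right _ _))).ne
  have hP : 0 < N r * m r := (inv_pos.mpr hC).trans_le hlo
  have hlogP : |log (N r * m r)| ≤ |log C| := by
    refine abs_le.mpr ⟨?_, (log_le_log hP hhi).trans (le_abs_self _)⟩
    calc -|log C| ≤ -log C := neg_le_neg (le_abs_self _)
      _ = log C⁻¹ := (log_inv C).symm
      _ ≤ log (N r * m r) := log_le_log (inv_pos.mpr hC) hlo
  calc |log (m r) / log r - log (N r) / -log r| = |log (N r * m r)| / |log r| := by
        rw [log_mul (left_ne_zero_of_mul hP.ne') (right_ne_zero_of_mul hP.ne'), ← abs_div]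
        congr 1
        field_simp
        ring
    _ ≤ (|log C| + 1) / |log r| := by gcongr; linarith

/-- For a homogeneous set `A` and every `x ∈ A`,
`f_A(r) = log N(A,r)/(−log r)` is equivalent to `α_A(x,r)`, i.e.
`|log N(A,r)/(−log r) − log μ(B(x,r))/log r| = O(1/|log r|)` as `r → 0`. -/
theorem statement3 {X : Type*} [MetricSpace X] [MeasurableSpace X] [BorelSpace X]
    (A : Set X) (μ : Measure X) (lam kappa del Del : ℝ)
    (hA : IsHomog A μ lam kappa del Del) :
    ∀ x ∈ A, EquivNearZero (fun r : ℝ => Real.log (coverNum A r : ℝ) / (-Real.log r))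
      (fun r => alphaPt μ x r) := by
  intro x hx
  obtain ⟨K, hK⟩ := hA.exists_doubling
  have hC : 0 < lam * K :=
    mul_pos (zero_lt_one.trans_le hA.one_le_lam) (hA.doubling_const_pos hK hx)
  refine equivNearZero_of_mul_mem_Icc hC (half_pos hA.diam_pos) fun r hr hrD => ?_
  have h2r : 2 * r ≤ Metric.diam A := by linarith
  exact ⟨hA.inv_le_coverNum_mul hK hx hr h2r, hA.coverNum_mul_le hK hx hr h2r⟩

end
end

section
/- Let E ∈ M(J,{n_k},{c_k}) be a Moran set in ℝ^d with |J| = 1 and inf_k c_k > 0, let μ be its Moran measure, and set r_k = c₁⋯c_k (with r₀ = 1). Then there is a constant C_E > 1, depending only on d and the Lebesgue measure of the interior of J, such that for every x ∈ E, every k ≥ 1 and every r with r_k < r ≤ r_{k−1}: (n₁⋯n_k)^{-1} ≤ μ(B(x,r)) ≤ C_E (n₁⋯n_{k−1})^{-1} (where n₁⋯n_{k−1} = 1 for k = 1). -/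
open scoped ENNReal

noncomputable section

open Filter MeasureTheory

/-!
Every `x ∈ E` lies in a level-`k` basic set, of diameter `r_k < r`, so `B(x,r)` contains the whole
level-`k` cylinder of `x`, of mass `(n₁⋯n_k)⁻¹`. Conversely `μ(B(x,r))` is at most `(n₁⋯n_{k-1})⁻¹`
times the number of level-`(k-1)` basic sets meeting `B(x,r)`. These have diameter
`r_{k-1} ≥ r`, so they lie in `B(x, 2r_{k-1})`, and their interiors are pairwise disjoint, each of
Lebesgue measure `r_{k-1}^d |J°|`; comparing volumes bounds their number by `2^d |B(0,1)| / |J°|`.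
-/

open Metric MeasureTheory Set
open scoped Pointwise

section Similarity

variable {V : Type*} [NormedAddCommGroup V] {S : V → V} {ρ : ℝ}

theorem isometry_inv_smul_of_dist_eq_mul [NormedSpace ℝ V] (hρ : 0 < ρ)
    (hS : ∀ x y, dist (S x) (S y) = ρ * dist x y) : Isometry fun x => ρ⁻¹ • S x :=
  Isometry.of_dist_eq fun x y => by
    rw [dist_smul₀, hS, Real.norm_of_nonneg (inv_nonneg.2 hρ.le), inv_mul_cancel_left₀ hρ.ne']

theorem image_eq_smul_image_inv_smul [NormedSpace ℝ V] (hρ : ρ ≠ 0) (A : Set V) :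
    S '' A = ρ • (fun x => ρ⁻¹ • S x) '' A := by
  rw [← image_smul, image_image]
  simp only [smul_inv_smul₀ hρ]

theorem diam_image_of_dist_eq_mul [NormedSpace ℝ V] (hρ : 0 < ρ)
    (hS : ∀ x y, dist (S x) (S y) = ρ * dist x y) (A : Set V) : diam (S '' A) = ρ * diam A := by
  rw [image_eq_smul_image_inv_smul hρ.ne', diam_smul₀, Real.norm_of_nonneg hρ.le,
    (isometry_inv_smul_of_dist_eq_mul hρ hS).diam_image]

theorem volume_image_of_dist_eq_mul [InnerProductSpace ℝ V] [FiniteDimensional ℝ V]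
    [MeasurableSpace V] [BorelSpace V] (hρ : 0 < ρ) (hS : ∀ x y, dist (S x) (S y) = ρ * dist x y)
    (A : Set V) :
    volume (S '' A) = ENNReal.ofReal (ρ ^ Module.finrank ℝ V) * volume A := by
  rw [image_eq_smul_image_inv_smul hρ.ne', Measure.addHaar_smul, abs_of_pos (by positivity),
    ← InnerProductSpace.euclideanHausdorffMeasure_eq_volume,
    (isometry_inv_smul_of_dist_eq_mul hρ hS).euclideanHausdorffMeasure_image]

theorem image_interior_of_dist_eq_mul [NormedSpace ℝ V] [StrictConvexSpace ℝ V]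
    [FiniteDimensional ℝ V] (hρ : 0 < ρ) (hS : ∀ x y, dist (S x) (S y) = ρ * dist x y)
    (A : Set V) : S '' interior A = interior (S '' A) := by
  -- By Mazur–Ulam the rescaled isometry is affine, hence onto in finite dimension.
  have : Inhabited V := ⟨0⟩
  set T := ((isometry_inv_smul_of_dist_eq_mul hρ hS).affineIsometryOfStrictConvexSpace
    |>.toAffineIsometryEquiv rfl).toIsometryEquiv.toHomeomorph
  have hT : (T : V → V) = fun x => ρ⁻¹ • S x := rfl
  rw [image_eq_smul_image_inv_smul hρ.ne' (interior A), image_eq_smul_image_inv_smul hρ.ne' A,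
    ← hT, T.image_interior, interior_smul₀ hρ.ne']

end Similarity

section Counting

open Finset

variable {Ω ι α : Type*} [MeasurableSpace Ω] [MeasurableSpace α]

theorem measure_le_card_mul_of_mapsTo (ν : Measure Ω) (π : Ω → ι) {A : Set Ω} {s : Finset ι}
    (hA : MapsTo π A s) {p : ℝ≥0∞} (hp : ∀ ω, ν (π ⁻¹' {π ω}) ≤ p) : ν A ≤ #s * p := by
  have hfiber : ∀ i ∈ s, ν (π ⁻¹' {i}) ≤ p := by
    intro i _
    rcases (π ⁻¹' {i}).eq_empty_or_nonempty with h | ⟨ω, rfl⟩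
    · simp [h]
    · exact hp ω
  calc ν A ≤ ν (⋃ i ∈ s, π ⁻¹' {i}) := measure_mono fun ω hω => mem_biUnion (hA hω) rfl
    _ ≤ ∑ i ∈ s, ν (π ⁻¹' {i}) := measure_biUnion_finset_le s _
    _ ≤ ∑ _i ∈ s, p := sum_le_sum hfiber
    _ = #s * p := by rw [sum_const, nsmul_eq_mul]

theorem card_mul_le_measure_of_pairwiseDisjoint (μ : Measure α) {s : Finset ι} {U : ι → Set α}
    (hdisj : (s : Set ι).PairwiseDisjoint U) (hU : ∀ i ∈ s, MeasurableSet (U i)) {T : Set α}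
    (hT : ∀ i ∈ s, U i ⊆ T) {a : ℝ≥0∞} (ha : ∀ i ∈ s, a ≤ μ (U i)) : #s * a ≤ μ T :=
  calc (#s : ℝ≥0∞) * a = ∑ _i ∈ s, a := by rw [sum_const, nsmul_eq_mul]
    _ ≤ ∑ i ∈ s, μ (U i) := sum_le_sum ha
    _ = μ (⋃ i ∈ s, U i) := (measure_biUnion_finset hdisj hU).symm
    _ ≤ μ T := measure_mono (iUnion₂_subset hT)

end Counting

section Words

variable {n : ℕ → ℕ}

def wordOf {m : ℕ} (σ : ∀ i : Fin m, Fin (n i)) : List ℕ := List.ofFn fun i => (σ i : ℕ)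

@[simp]
theorem length_wordOf {m : ℕ} (σ : ∀ i : Fin m, Fin (n i)) : (wordOf σ).length = m :=
  List.length_ofFn

theorem admWord_iff {w : List ℕ} : AdmWord n w ↔ ∀ j (h : j < w.length), w[j] < n j :=
  ⟨fun hw j h => hw ⟨j, h⟩, fun hw i => hw i i.isLt⟩

theorem admWord_wordOf {m : ℕ} (σ : ∀ i : Fin m, Fin (n i)) : AdmWord n (wordOf σ) :=
  admWord_iff.2 fun j h => by simp [wordOf]

theorem wordOf_injective {m : ℕ} : Function.Injective (wordOf (n := n) (m := m)) := by
  intro σ τ h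
  funext i
  exact Fin.ext (congrFun (List.ofFn_injective h) i)

theorem AdmWord.of_append_singleton {w : List ℕ} {i : ℕ} (hw : AdmWord n (w ++ [i])) :
    AdmWord n w ∧ i < n w.length := by
  rw [admWord_iff] at hw
  refine ⟨admWord_iff.2 fun j hj => ?_, by simpa using hw w.length (by simp)⟩
  have := hw j (by simp; omega)
  rwa [List.getElem_append_left hj] at this

theorem AdmWord.exists_wordOf_eq (hn : ∀ j, 0 < n j) {w : List ℕ} (hw : AdmWord n w) :
    ∃ ω : ∀ j, Fin (n j), wordOf (fun i : Fin w.length => ω i) = w := by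
  refine ⟨fun j => if h : j < w.length then ⟨w[j], hw ⟨j, h⟩⟩ else ⟨0, hn j⟩, ?_⟩
  apply List.ext_getElem (by simp)
  intro j hj _
  simp_all [wordOf]

end Words

namespace IsMoranSystem

open Finset

variable {d : ℕ} {J : Set (EuclideanSpace ℝ (Fin d))} {n : ℕ → ℕ} {c : ℕ → ℝ}
  {Jw : List ℕ → Set (EuclideanSpace ℝ (Fin d))}

theorem prodC_pos (M : IsMoranSystem J n c Jw) (k : ℕ) : 0 < prodC c k :=
  Finset.prod_pos fun i _ => M.c_pos i

theorem prodN_pos (M : IsMoranSystem J n c Jw) (k : ℕ) : 0 < prodN n k :=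
  Finset.prod_pos fun i _ => two_pos.trans_le (M.two_le_n i)

theorem subset_root (M : IsMoranSystem J n c Jw) {w : List ℕ} (hw : AdmWord n w) : Jw w ⊆ J := by
  induction w using List.reverseRecOn with
  | nil => rw [M.root]
  | append_singleton u i ih =>
    obtain ⟨hu, hi⟩ := hw.of_append_singleton
    exact (M.subset u hu i hi).trans (ih hu)

theorem diam_eq (M : IsMoranSystem J n c Jw) {w : List ℕ} (hw : AdmWord n w) :
    diam (Jw w) = prodC c w.length * diam J := by
  induction w using List.reverseRecOn with
  | nil => simp [M.root, prodC]
  | append_singleton u i ih =>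
    obtain ⟨hu, hi⟩ := hw.of_append_singleton
    obtain ⟨S, hS, hSu⟩ := M.similar u hu i hi
    rw [hSu, diam_image_of_dist_eq_mul (M.c_pos _) hS, ih hu, List.length_append, prodC, prodC,
      List.length_singleton, Finset.prod_range_succ]
    ring

theorem volume_interior_eq (M : IsMoranSystem J n c Jw) {w : List ℕ} (hw : AdmWord n w) :
    volume (interior (Jw w)) = ENNReal.ofReal (prodC c w.length ^ d) * volume (interior J) := by
  induction w using List.reverseRecOn with
  | nil => simp [M.root, prodC]
  | append_singleton u i ih =>
    obtain ⟨hu, hi⟩ := hw.of_append_singleton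
    obtain ⟨S, hS, hSu⟩ := M.similar u hu i hi
    rw [hSu, ← image_interior_of_dist_eq_mul (M.c_pos _) hS,
      volume_image_of_dist_eq_mul (M.c_pos _) hS, finrank_euclideanSpace_fin, ih hu, ← mul_assoc,
      ← ENNReal.ofReal_mul (pow_pos (M.c_pos _) d).le, List.length_append, List.length_singleton,
      prodC, prodC, Finset.prod_range_succ, mul_pow, mul_comm (c u.length ^ d)]

theorem dist_le (M : IsMoranSystem J n c Jw) {w : List ℕ} (hw : AdmWord n w)
    {x y : EuclideanSpace ℝ (Fin d)} (hx : x ∈ Jw w) (hy : y ∈ Jw w) :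
    dist x y ≤ prodC c w.length * diam J :=
  M.diam_eq hw ▸ dist_le_diam_of_mem (M.compact.isBounded.subset (M.subset_root hw)) hx hy

theorem disjoint_interior (M : IsMoranSystem J n c Jw) {u u' : List ℕ} (hu : AdmWord n u)
    (hu' : AdmWord n u') (hlen : u.length = u'.length) (hne : u ≠ u') :
    Disjoint (interior (Jw u)) (interior (Jw u')) := by
  induction u using List.reverseRecOn generalizing u' with
  | nil => exact absurd (List.eq_nil_of_length_eq_zero hlen.symm).symm hne
  | append_singleton v a ih =>
    obtain ⟨v', a', rfl⟩ : ∃ v' a', u' = v' ++ [a'] := by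
      rcases List.eq_nil_or_concat u' with rfl | h
      · simp at hlen
      · simpa using h
    obtain ⟨hv, ha⟩ := hu.of_append_singleton
    obtain ⟨hv', ha'⟩ := hu'.of_append_singleton
    have hvlen : v.length = v'.length := by simpa using hlen
    by_cases hvv : v = v'
    · subst hvv
      exact M.disj_int v hv a ha a' ha' fun h => hne (h ▸ rfl)
    · exact (ih hv hv' hvlen hvv).mono (interior_mono (M.subset v hv a ha))
        (interior_mono (M.subset v' hv' a' ha'))

open scoped Classical in
theorem card_meeting_mul_volume_le (M : IsMoranSystem J n c Jw) (x : EuclideanSpace ℝ (Fin d))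
    {m : ℕ} {r : ℝ} (hr : r ≤ prodC c m * diam J) :
    #(univ.filter fun σ : ∀ i : Fin m, Fin (n i) => (Jw (wordOf σ) ∩ closedBall x r).Nonempty) *
        volume (interior J) ≤
      ENNReal.ofReal ((2 * diam J) ^ d) * volume (ball (0 : EuclideanSpace ℝ (Fin d)) 1) := by
  set W := univ.filter fun σ : ∀ i : Fin m, Fin (n i) => (Jw (wordOf σ) ∩ closedBall x r).Nonempty
  have hP : 0 < prodC c m ^ d := pow_pos (M.prodC_pos m) d
  have hpack := card_mul_le_measure_of_pairwiseDisjoint volume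
    (s := W) (U := fun σ => interior (Jw (wordOf σ)))
    (T := closedBall x (2 * (prodC c m * diam J)))
    (fun σ _ τ _ hστ => M.disjoint_interior (admWord_wordOf σ) (admWord_wordOf τ) (by simp)
      (wordOf_injective.ne hστ))
    (fun _ _ => isOpen_interior.measurableSet)
    (fun σ hσ y hy => by
      obtain ⟨z, hzσ, hzx⟩ := (mem_filter.1 hσ).2
      have hyz := M.dist_le (admWord_wordOf σ) (interior_subset hy) hzσ
      rw [length_wordOf] at hyz
      rw [mem_closedBall] at hzx ⊢
      linarith [dist_triangle y z x])
    (a := ENNReal.ofReal (prodC c m ^ d) * volume (interior J))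
    (fun σ _ => by rw [M.volume_interior_eq (admWord_wordOf σ), length_wordOf])
  have hball : volume (closedBall x (2 * (prodC c m * diam J))) = ENNReal.ofReal (prodC c m ^ d) *
      (ENNReal.ofReal ((2 * diam J) ^ d) * volume (ball (0 : EuclideanSpace ℝ (Fin d)) 1)) := by
    rw [Measure.addHaar_closedBall _ _ (by positivity [M.prodC_pos m]), finrank_euclideanSpace_fin,
      ← mul_assoc (ENNReal.ofReal _), ← ENNReal.ofReal_mul hP.le]
    ring_nf
  rw [hball, mul_left_comm] at hpack
  exact (ENNReal.mul_le_mul_iff_right (by simpa using hP) ENNReal.ofReal_ne_top).1 hpack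

variable {ν : Measure (∀ k, Fin (n k))} {f : (∀ k, Fin (n k)) → EuclideanSpace ℝ (Fin d)}

theorem inv_prodN_le_measure_preimage_closedBall (M : IsMoranSystem J n c Jw)
    (hν : ∀ (k : ℕ) (ω : ∀ j, Fin (n j)), ν {ω' | ∀ i < k, ω' i = ω i} = (prodN n k : ℝ≥0∞)⁻¹)
    (hfJ : ∀ ω (k : ℕ), f ω ∈ Jw (wordOf fun i : Fin k => ω i))
    {x : EuclideanSpace ℝ (Fin d)} (hx : x ∈ moranSet n Jw) {k : ℕ} {r : ℝ}
    (hr : prodC c k * diam J ≤ r) :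
    (prodN n k : ℝ≥0∞)⁻¹ ≤ ν (f ⁻¹' closedBall x r) := by
  obtain ⟨w, ⟨rfl, hw⟩, hxw⟩ : ∃ w, (w.length = k ∧ AdmWord n w) ∧ x ∈ Jw w := by
    simpa using mem_iInter.1 hx k
  obtain ⟨ω₀, hω₀⟩ := hw.exists_wordOf_eq fun j => two_pos.trans_le (M.two_le_n j)
  rw [← hν w.length ω₀]
  refine measure_mono fun ω hω => mem_closedBall.2 ((M.dist_le hw ?_ hxw).trans hr)
  have hprefix : (wordOf fun i : Fin w.length => ω i) = wordOf fun i : Fin w.length => ω₀ i :=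
    congrArg wordOf (funext fun i => hω i i.isLt)
  have h := hfJ ω w.length
  rwa [hprefix, hω₀] at h

theorem measure_preimage_closedBall_mul_volume_le (M : IsMoranSystem J n c Jw)
    (hν : ∀ (k : ℕ) (ω : ∀ j, Fin (n j)), ν {ω' | ∀ i < k, ω' i = ω i} = (prodN n k : ℝ≥0∞)⁻¹)
    (hfJ : ∀ ω (k : ℕ), f ω ∈ Jw (wordOf fun i : Fin k => ω i))
    (x : EuclideanSpace ℝ (Fin d)) {m : ℕ} {r : ℝ} (hr : r ≤ prodC c m * diam J) :
    ν (f ⁻¹' closedBall x r) * volume (interior J) ≤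
      ENNReal.ofReal ((2 * diam J) ^ d) * volume (ball (0 : EuclideanSpace ℝ (Fin d)) 1) *
        (prodN n m : ℝ≥0∞)⁻¹ := by
  classical
  set W := univ.filter fun σ : ∀ i : Fin m, Fin (n i) =>
    (Jw (wordOf σ) ∩ closedBall x r).Nonempty
  have hcylinder (ω : ∀ j, Fin (n j)) :
      (fun (ω' : ∀ j, Fin (n j)) (i : Fin m) => ω' i) ⁻¹' {fun (i : Fin m) => ω i} =
        {ω' | ∀ i < m, ω' i = ω i} := by
    ext ω'
    simp [funext_iff, Fin.forall_iff]
  have hcover : ν (f ⁻¹' closedBall x r) ≤ #W * (prodN n m : ℝ≥0∞)⁻¹ :=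
    measure_le_card_mul_of_mapsTo ν (fun ω (i : Fin m) => ω i)
      (fun ω hω => by simpa [W] using ⟨f ω, hfJ ω m, hω⟩) fun ω => by rw [hcylinder, hν]
  calc ν (f ⁻¹' closedBall x r) * volume (interior J)
      ≤ #W * (prodN n m : ℝ≥0∞)⁻¹ * volume (interior J) := mul_le_mul_left hcover _
    _ = #W * volume (interior J) * (prodN n m : ℝ≥0∞)⁻¹ := mul_right_comm _ _ _
    _ ≤ _ := mul_le_mul_left (M.card_meeting_mul_volume_le x hr) _

end IsMoranSystem

/-- Estimate for the Moran measure: there is a constant `C_E > 1`, depending only on the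
dimension `d` and the Lebesgue measure of the interior of `J`, such that for `x ∈ E`,
`k ≥ 1` and `r_k < r ≤ r_{k−1}` one has
`(n₁⋯n_k)⁻¹ ≤ μ(B(x,r)) ≤ C_E (n₁⋯n_{k−1})⁻¹`, where `μ` is the Moran measure, i.e. the
image under the coding map `f` of the product measure `ν` giving each level-`k` cylinder
measure `(n₁⋯n_k)⁻¹`. -/
theorem statement4 (d : ℕ) (v : ℝ≥0∞) :
    ∃ C : ℝ, 1 < C ∧
      ∀ (J : Set (EuclideanSpace ℝ (Fin d))) (n : ℕ → ℕ) (c : ℕ → ℝ)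
        (Jw : List ℕ → Set (EuclideanSpace ℝ (Fin d))),
        IsMoranSystem J n c Jw → Metric.diam J = 1 → volume (interior J) = v →
        ∀ (ν : Measure (∀ k : ℕ, Fin (n k))) (f : (∀ k : ℕ, Fin (n k)) → EuclideanSpace ℝ (Fin d)),
          IsProbabilityMeasure ν →
          (∀ (k : ℕ) (w : ∀ j : ℕ, Fin (n j)),
            ν {ω | ∀ i : ℕ, i < k → ω i = w i} = ((prodN n k : ℝ≥0∞))⁻¹) →
          Measurable f →
          (∀ (w : ∀ j : ℕ, Fin (n j)) (k : ℕ),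
            f w ∈ Jw (List.ofFn fun i : Fin k => ((w i.val).val))) →
          ∀ x ∈ moranSet n Jw, ∀ k : ℕ, 1 ≤ k → ∀ r : ℝ,
            prodC c k < r → r ≤ prodC c (k - 1) →
            ((prodN n k : ℝ))⁻¹ ≤ ((ν.map f) (Metric.closedBall x r)).toReal ∧
              ((ν.map f) (Metric.closedBall x r)).toReal ≤ C * ((prodN n (k - 1) : ℝ))⁻¹ := by
  set K := 2 ^ d * volume.real (ball (0 : EuclideanSpace ℝ (Fin d)) 1) / v.toReal
  refine ⟨max K 2, one_lt_two.trans_le (le_max_right K 2), ?_⟩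
  intro J n c Jw M hdiam hvol ν f _ hν hf hfJ x hx k _ r hrk hrk'
  have hv : 0 < v.toReal := hvol ▸ ENNReal.toReal_pos
    (isOpen_interior.measure_pos volume M.int_nonempty).ne'
    (measure_mono interior_subset |>.trans_lt M.compact.measure_lt_top).ne
  rw [Measure.map_apply hf measurableSet_closedBall]
  constructor
  · have h := M.inv_prodN_le_measure_preimage_closedBall hν hfJ hx (k := k) (r := r)
      (by rw [hdiam, mul_one]; exact hrk.le)
    simpa using ENNReal.toReal_mono (measure_ne_top _ _) h
  · have h := M.measure_preimage_closedBall_mul_volume_le hν hfJ x (m := k - 1) (r := r)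
      (by rwa [hdiam, mul_one])
    rw [hdiam, hvol, mul_one] at h
    have h' := ENNReal.toReal_mono (by finiteness [(M.prodN_pos (k - 1)).ne']) h
    simp only [ENNReal.toReal_mul, ENNReal.toReal_inv, ENNReal.toReal_natCast,
      ENNReal.toReal_ofReal (by positivity : (0 : ℝ) ≤ 2 ^ d)] at h'
    calc (ν (f ⁻¹' closedBall x r)).toReal ≤ K * ((prodN n (k - 1) : ℝ))⁻¹ := by
          rw [div_mul_eq_mul_div, le_div_iff₀ hv]
          exact h'
      _ ≤ max K 2 * ((prodN n (k - 1) : ℝ))⁻¹ := by gcongr; exact le_max_left K 2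
end
end

section
/- Let A be a homogeneous set. If for some r₀ < 1 the supremum over all r, r' with r' < r₀·r < r < r₀ of |(α_A(r) log r − α_A(r') log r')/(log r − log r')| is strictly less than 1, then A is uniformly disconnected. -/
open scoped ENNReal

noncomputable section

open Filter MeasureTheory

/-- Crossing lemma: a chain starting within distance `t` of `x` and ending beyond `t`
must hit the annulus `(t, t + s]` (where `s` bounds the step sizes). -/
lemma exists_crossing_index {X : Type*} [MetricSpace X] (x : X) (f : ℕ → X) (n : ℕ)
    (t s : ℝ) (h0 : dist x (f 0) ≤ t)
    (hstep : ∀ i < n, dist (f i) (f (i + 1)) ≤ s)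
    (hn : t < dist x (f n)) :
    ∃ i ≤ n, t < dist x (f i) ∧ dist x (f i) ≤ t + s := by
  classical
  have hP : ∃ i, t < dist x (f i) := ⟨n, hn⟩
  set i := Nat.find hP with hidef
  have hi : t < dist x (f i) := Nat.find_spec hP
  have hin : i ≤ n := Nat.find_min' hP hn
  have hi0 : i ≠ 0 := by
    intro h
    rw [h] at hi
    exact absurd h0 (not_le.mpr hi)
  obtain ⟨j, hj⟩ : ∃ j, i = j + 1 := ⟨i - 1, (Nat.succ_pred_eq_of_pos (Nat.pos_of_ne_zero hi0)).symm⟩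
  have hjlt : j < i := by omega
  have hjn : j < n := by omega
  have hnotj : ¬ t < dist x (f j) := Nat.find_min hP hjlt
  push_neg at hnotj
  refine ⟨i, hin, hi, ?_⟩
  have := hstep j hjn
  calc dist x (f i) ≤ dist x (f j) + dist (f j) (f i) := dist_triangle _ _ _
    _ = dist x (f j) + dist (f j) (f (j + 1)) := by rw [hj]
    _ ≤ t + s := add_le_add hnotj this

set_option maxHeartbeats 3200000 in
/-- If `sup_{r' < r₀ r < r < r₀} |(α_A(r)log r − α_A(r')log r')/(log r − log r')| < 1` for
some `r₀ < 1`, then the homogeneous set `A` is uniformly disconnected. -/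
theorem statement16 {X : Type*} [MetricSpace X] [MeasurableSpace X] [BorelSpace X]
    (A : Set X) (μ : Measure X) (lam kappa del Del : ℝ)
    (hA : IsHomog A μ lam kappa del Del) (gA : ℝ → ℝ) (hgA : IsAlphaRep A μ gA)
    (hsup : ∃ r₀ : ℝ, 0 < r₀ ∧ r₀ < 1 ∧ ∃ b : ℝ, b < 1 ∧
      ∀ r r' : ℝ, 0 < r' → r' < r₀ * r → r < r₀ →
        |(gA r * Real.log r - gA r' * Real.log r') / (Real.log r - Real.log r')| ≤ b) :
    UnifDisconn A := by
  classical
  obtain ⟨x₀, hx₀A, C₀, hC₀, δ, hδ, hrep⟩ := hgA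
  obtain ⟨r₀, hr₀, hr₀1, b, hb1, hb⟩ := hsup
  haveI : IsProbabilityMeasure μ := hA.prob
  have hlam : (1 : ℝ) ≤ lam := hA.one_le_lam
  have hlam0 : (0 : ℝ) < lam := lt_of_lt_of_le one_pos hlam
  have hdiam := hA.diam_pos
  -- `b ≥ 0`
  have hb0 : 0 ≤ b := by
    have h := hb (r₀ / 2) (r₀ ^ 2 / 4) (by positivity) (by nlinarith) (by linarith)
    exact le_trans (abs_nonneg _) h
  -- positivity and finiteness of ball measures
  have hm_pos : ∀ x ∈ A, ∀ s : ℝ, 0 < s → 0 < (μ (Metric.closedBall x s)).toReal := by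
    intro x hx s hs
    exact ENNReal.toReal_pos (ne_of_gt (hA.supp_pos x hx s hs)) (measure_ne_top μ _)
  -- comparison of measures at different centers
  have hcent : ∀ x ∈ A, ∀ s : ℝ, 0 < s → s ≤ Metric.diam A →
      |Real.log (μ (Metric.closedBall x s)).toReal
        - Real.log (μ (Metric.closedBall x₀ s)).toReal| ≤ Real.log lam := by
    intro x hx s hs hs'
    have p1 := hm_pos x hx s hs
    have p2 := hm_pos x₀ hx₀A s hs
    have h1 := hA.ratio_le x hx x₀ hx₀A s hs hs'
    have h2 := hA.ratio_le x₀ hx₀A x hx s hs hs'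
    have l1 : Real.log (μ (Metric.closedBall x s)).toReal ≤
        Real.log lam + Real.log (μ (Metric.closedBall x₀ s)).toReal := by
      calc Real.log (μ (Metric.closedBall x s)).toReal
          ≤ Real.log (lam * (μ (Metric.closedBall x₀ s)).toReal) :=
            Real.log_le_log p1 h1
        _ = Real.log lam + Real.log (μ (Metric.closedBall x₀ s)).toReal :=
            Real.log_mul (ne_of_gt hlam0) (ne_of_gt p2)
    have l2 : Real.log (μ (Metric.closedBall x₀ s)).toReal ≤
        Real.log lam + Real.log (μ (Metric.closedBall x s)).toReal := by
      calc Real.log (μ (Metric.closedBall x₀ s)).toReal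
          ≤ Real.log (lam * (μ (Metric.closedBall x s)).toReal) :=
            Real.log_le_log p2 h2
        _ = Real.log lam + Real.log (μ (Metric.closedBall x s)).toReal :=
            Real.log_mul (ne_of_gt hlam0) (ne_of_gt p1)
    rw [abs_le]
    constructor <;> linarith
  -- `gA s * log s` approximates `log μ(B(x₀,s))`
  have hrep' : ∀ s : ℝ, 0 < s → s < δ → s < 1 →
      |gA s * Real.log s - Real.log (μ (Metric.closedBall x₀ s)).toReal| ≤ C₀ := by
    intro s hs hsδ hs1
    have h := hrep s hs hsδ
    have hlogneg : Real.log s < 0 := Real.log_neg hs hs1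
    have hlogne : Real.log s ≠ 0 := ne_of_lt hlogneg
    have key : gA s * Real.log s - Real.log (μ (Metric.closedBall x₀ s)).toReal =
        -((alphaPt μ x₀ s - gA s) * Real.log s) := by
      simp only [alphaPt]
      field_simp
      ring
    rw [key, abs_neg, abs_mul]
    calc |alphaPt μ x₀ s - gA s| * |Real.log s|
        ≤ (C₀ / |Real.log s|) * |Real.log s| :=
          mul_le_mul_of_nonneg_right h (abs_nonneg _)
      _ = C₀ := div_mul_cancel₀ _ (abs_ne_zero.mpr hlogne)
  set Q : ℝ := 2 * C₀ + 2 * Real.log lam with hQdef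
  -- choose the number of annuli `M`
  have hKpos : (0 : ℝ) < 5 * lam * Real.exp Q := by positivity
  have htend : Filter.Tendsto (fun x : ℝ => x ^ (b - 1)) Filter.atTop (nhds 0) := by
    have := tendsto_rpow_neg_atTop (show (0 : ℝ) < 1 - b by linarith)
    simpa [neg_sub] using this
  have hev : ∀ᶠ x : ℝ in Filter.atTop, x ^ (b - 1) < (5 * lam * Real.exp Q)⁻¹ :=
    htend.eventually_lt_const (by positivity)
  obtain ⟨X0, hX0⟩ := Filter.eventually_atTop.mp hev
  obtain ⟨N, hN⟩ := exists_nat_gt (max X0 (1 / r₀))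
  set M : ℕ := N + 1 with hMdef
  set cM : ℝ := 4 * (M : ℝ) + 1 with hcMdef
  have hM1 : (1 : ℝ) ≤ (M : ℝ) := by exact_mod_cast Nat.one_le_iff_ne_zero.mpr (by omega)
  have hNcM : (N : ℝ) ≤ cM := by
    have : (N : ℝ) ≤ (M : ℝ) := by exact_mod_cast Nat.le_succ N
    simp only [hcMdef]; linarith
  have hX0cM : X0 ≤ cM := le_trans (le_of_lt (lt_of_le_of_lt (le_max_left _ _) hN)) hNcM
  have hr₀cM : 1 / r₀ < cM := lt_of_lt_of_le (lt_of_le_of_lt (le_max_right _ _) hN) hNcM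
  have hcM0 : (0 : ℝ) < cM := by simp only [hcMdef]; linarith
  have hcM1 : (1 : ℝ) < cM := by simp only [hcMdef]; linarith
  have h1r₀cM : 1 < r₀ * cM := by
    rw [div_lt_iff₀ hr₀] at hr₀cM; linarith [hr₀cM]
  -- the key numerical bound
  have hMbound : lam * Real.exp Q * cM ^ b < (M : ℝ) := by
    have h1 : cM ^ (b - 1) < (5 * lam * Real.exp Q)⁻¹ := hX0 cM hX0cM
    have h2 : cM ^ b = cM ^ (b - 1) * cM := by
      rw [← Real.rpow_add_one (ne_of_gt hcM0) (b - 1)]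
      norm_num
    have h3 : lam * Real.exp Q * cM ^ b < lam * Real.exp Q * ((5 * lam * Real.exp Q)⁻¹ * cM) := by
      rw [h2]
      apply mul_lt_mul_of_pos_left _ (by positivity)
      exact mul_lt_mul_of_pos_right h1 hcM0
    have h4 : lam * Real.exp Q * ((5 * lam * Real.exp Q)⁻¹ * cM) = cM / 5 := by
      field_simp
    have h5 : cM / 5 ≤ (M : ℝ) := by simp only [hcMdef]; linarith
    linarith
  -- the scale below which everything works
  set rstar : ℝ := min (δ / cM) (min (r₀ / cM) (Metric.diam A / cM)) with hrstardef
  have hrstar : 0 < rstar := by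
    apply lt_min (by positivity) (lt_min (by positivity) (by positivity))
  refine ⟨4 * (M : ℝ), by linarith, rstar, hrstar, ?_⟩
  intro x hx r hr hrrs
  -- basic size facts about `r` and `R = cM * r`
  set R : ℝ := cM * r with hRdef
  have hR0 : 0 < R := by positivity
  have hRδ : R < δ := by
    have : r < δ / cM := lt_of_lt_of_le hrrs (min_le_left _ _)
    calc R = cM * r := rfl
      _ < cM * (δ / cM) := by exact mul_lt_mul_of_pos_left this hcM0
      _ = δ := by field_simp
  have hRr₀ : R < r₀ := by
    have : r < r₀ / cM := lt_of_lt_of_le hrrs (le_trans (min_le_right _ _) (min_le_left _ _))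
    calc R = cM * r := rfl
      _ < cM * (r₀ / cM) := by exact mul_lt_mul_of_pos_left this hcM0
      _ = r₀ := by field_simp
  have hRdiam : R ≤ Metric.diam A := by
    have : r < Metric.diam A / cM :=
      lt_of_lt_of_le hrrs (le_trans (min_le_right _ _) (min_le_right _ _))
    calc R = cM * r := rfl
      _ ≤ cM * (Metric.diam A / cM) := le_of_lt (mul_lt_mul_of_pos_left this hcM0)
      _ = Metric.diam A := by field_simp
  have hR1 : R < 1 := lt_trans hRr₀ hr₀1
  have hrR : r ≤ R := by
    have : 1 * r ≤ cM * r := mul_le_mul_of_nonneg_right (le_of_lt hcM1) (le_of_lt hr)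
    simpa using this
  have hr1 : r < 1 := lt_of_le_of_lt hrR hR1
  have hrδ : r < δ := lt_of_le_of_lt hrR hRδ
  have hrdiam : r ≤ Metric.diam A := le_trans hrR hRdiam
  -- the chain component
  set E : Set X := {y | ∃ (n : ℕ) (f : ℕ → X), dist x (f 0) ≤ r ∧ (∀ i ≤ n, f i ∈ A) ∧
    (∀ i < n, dist (f i) (f (i + 1)) ≤ 2 * r) ∧ f n = y} with hEdef
  have hEA : E ⊆ A := by
    rintro y ⟨n, f, _, hfA, _, hfn⟩
    rw [← hfn]; exact hfA n le_rfl
  have hIE : A ∩ Metric.closedBall x r ⊆ E := by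
    rintro y ⟨hyA, hyB⟩
    exact ⟨0, fun _ => y, by rwa [dist_comm], fun _ _ => hyA, fun i h => absurd h (by omega),
      rfl⟩
  have hclose : ∀ y ∈ E, ∀ z ∈ A, dist y z ≤ 2 * r → z ∈ E := by
    rintro y ⟨n, f, hf0, hfA, hstep, hfn⟩ z hzA hdz
    refine ⟨n + 1, fun i => if i ≤ n then f i else z, ?_, ?_, ?_, ?_⟩
    · simpa [Nat.zero_le] using hf0
    · intro i hi
      by_cases h : i ≤ n
      · simpa [h] using hfA i h
      · simpa [h] using hzA
    · intro i hi
      by_cases h : i < n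
      · have h1 : i ≤ n := le_of_lt h
        have h2 : i + 1 ≤ n := h
        simpa [h1, h2] using hstep i h
      · have h1 : i = n := by omega
        have h2 : ¬ (i + 1 ≤ n) := by omega
        subst h1
        simpa [le_refl, h2, hfn] using hdz
    · simp
  refine ⟨E, hEA, hIE, ?_, ?_⟩
  · -- containment in `B(x, 4M·r)` via the measure argument
    rintro y ⟨n, f, hf0, hfA, hstep, hfn⟩
    rw [Metric.mem_closedBall]
    by_contra hyc
    push_neg at hyc
    have hxy : 4 * (M : ℝ) * r < dist x (f n) := by
      rw [hfn, dist_comm]; exact hyc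
    -- crossing points in the annuli
    have hidx : ∀ k : Fin M, ∃ i ≤ n,
        (4 * ((k : ℕ) : ℝ) + 1) * r < dist x (f i) ∧
        dist x (f i) ≤ (4 * ((k : ℕ) : ℝ) + 3) * r := by
      intro k
      have hk : ((k : ℕ) : ℝ) ≤ (M : ℝ) - 1 := by
        have h1 : ((k : ℕ) : ℝ) + 1 ≤ (M : ℝ) := by exact_mod_cast Nat.succ_le_of_lt k.2
        linarith
      have hk0 : (0 : ℝ) ≤ ((k : ℕ) : ℝ) := Nat.cast_nonneg _
      have h0 : dist x (f 0) ≤ (4 * ((k : ℕ) : ℝ) + 1) * r := by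
        have h1 : (1 : ℝ) ≤ 4 * ((k : ℕ) : ℝ) + 1 := by linarith
        have h2 : 1 * r ≤ (4 * ((k : ℕ) : ℝ) + 1) * r := mul_le_mul_of_nonneg_right h1 hr.le
        linarith
      have hend : (4 * ((k : ℕ) : ℝ) + 1) * r < dist x (f n) := by
        have h1 : 4 * ((k : ℕ) : ℝ) + 1 ≤ 4 * (M : ℝ) := by linarith
        have h2 : (4 * ((k : ℕ) : ℝ) + 1) * r ≤ 4 * (M : ℝ) * r := mul_le_mul_of_nonneg_right h1 hr.le
        linarith
      obtain ⟨i, hin, h1, h2⟩ := exists_crossing_index x f n ((4 * ((k : ℕ) : ℝ) + 1) * r)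
        (2 * r) h0 hstep hend
      exact ⟨i, hin, h1, by linarith⟩
    choose i hin hlow hupp using hidx
    set z : Fin M → X := fun k => f (i k) with hzdef
    have hzA : ∀ k, z k ∈ A := fun k => hfA _ (hin k)
    have hsep : ∀ k j : Fin M, (k : ℕ) < (j : ℕ) → 2 * r < dist (z k) (z j) := by
      intro k j hkj
      have hkj' : ((k : ℕ) : ℝ) + 1 ≤ ((j : ℕ) : ℝ) := by exact_mod_cast hkj
      have h1 := hlow j
      have h2 := hupp k
      have h3 : dist x (z j) ≤ dist x (z k) + dist (z k) (z j) := dist_triangle _ _ _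
      nlinarith
    have hdisj : ∀ k j : Fin M, k ≠ j →
        Disjoint (Metric.closedBall (z k) r) (Metric.closedBall (z j) r) := by
      intro k j hkj
      have hne : (k : ℕ) ≠ (j : ℕ) := fun h => hkj (Fin.ext h)
      rcases lt_or_gt_of_ne hne with h | h
      · exact Metric.closedBall_disjoint_closedBall (by linarith [hsep k j h])
      · exact (Metric.closedBall_disjoint_closedBall
          (by linarith [hsep j k h])).symm
    -- measure estimates
    have hsum : μ (⋃ k ∈ (Finset.univ : Finset (Fin M)), Metric.closedBall (z k) r) =
        ∑ k : Fin M, μ (Metric.closedBall (z k) r) := by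
      apply measure_biUnion_finset
      · intro k _ j _ hkj
        exact hdisj k j hkj
      · intro k _
        exact measurableSet_closedBall
    have hsub : (⋃ k ∈ (Finset.univ : Finset (Fin M)), Metric.closedBall (z k) r) ⊆
        Metric.closedBall x R := by
      intro w hw
      simp only [Finset.mem_univ, Set.iUnion_true, Set.mem_iUnion] at hw
      obtain ⟨k, hk⟩ := hw
      rw [Metric.mem_closedBall] at hk ⊢
      have hk' : ((k : ℕ) : ℝ) ≤ (M : ℝ) - 1 := by
        have h1 : ((k : ℕ) : ℝ) + 1 ≤ (M : ℝ) := by exact_mod_cast Nat.succ_le_of_lt k.2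
        linarith
      have h1 : dist w x ≤ dist w (z k) + dist (z k) x := dist_triangle _ _ _
      have h2 : dist (z k) x ≤ (4 * ((k : ℕ) : ℝ) + 3) * r := by
        rw [dist_comm]; exact hupp k
      have : R = (4 * (M : ℝ) + 1) * r := by rw [hRdef, hcMdef]
      nlinarith
    have hle : ∑ k : Fin M, μ (Metric.closedBall (z k) r) ≤ μ (Metric.closedBall x R) := by
      rw [← hsum]; exact measure_mono hsub
    have hsum' : ∑ k : Fin M, (μ (Metric.closedBall (z k) r)).toReal ≤
        (μ (Metric.closedBall x R)).toReal := by
      rw [← ENNReal.toReal_sum (fun a _ => measure_ne_top μ _)]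
      exact ENNReal.toReal_mono (measure_ne_top μ _) hle
    set m₁ : ℝ := (μ (Metric.closedBall x r)).toReal with hm₁def
    have hm₁pos : 0 < m₁ := hm_pos x hx r hr
    have hterm : ∀ k : Fin M, m₁ / lam ≤ (μ (Metric.closedBall (z k) r)).toReal := by
      intro k
      have := hA.ratio_le x hx (z k) (hzA k) r hr hrdiam
      rw [div_le_iff₀ hlam0]
      linarith
    have hlower : (M : ℝ) * (m₁ / lam) ≤ (μ (Metric.closedBall x R)).toReal := by
      calc (M : ℝ) * (m₁ / lam) = ∑ _k : Fin M, m₁ / lam := by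
            rw [Finset.sum_const, Finset.card_univ, Fintype.card_fin, nsmul_eq_mul]
        _ ≤ ∑ k : Fin M, (μ (Metric.closedBall (z k) r)).toReal :=
            Finset.sum_le_sum (fun k _ => hterm k)
        _ ≤ _ := hsum'
    -- growth estimate
    have hgrow : (μ (Metric.closedBall x R)).toReal ≤
        Real.exp (Q + b * Real.log cM) * m₁ := by
      set m₂ : ℝ := (μ (Metric.closedBall x R)).toReal with hm₂def
      have hm₂pos : 0 < m₂ := hm_pos x hx R hR0
      have e1 := hrep' r hr hrδ hr1
      have e2 := hrep' R hR0 hRδ hR1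
      have e3 := hcent x hx r hr hrdiam
      have e4 := hcent x hx R hR0 hRdiam
      have hlogcM : 0 < Real.log cM := Real.log_pos hcM1
      have hlogR : Real.log R = Real.log cM + Real.log r :=
        Real.log_mul (ne_of_gt hcM0) (ne_of_gt hr)
      have e5 : |gA R * Real.log R - gA r * Real.log r| ≤ b * Real.log cM := by
        have h := hb R r hr (by nlinarith) hRr₀
        have hden : Real.log R - Real.log r = Real.log cM := by rw [hlogR]; ring
        rw [hden] at h
        rw [abs_div, abs_of_pos hlogcM] at h
        exact (div_le_iff₀ hlogcM).mp h
      rw [abs_le] at e1 e2 e3 e4 e5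
      have hlog2 : Real.log m₂ ≤ Real.log m₁ + (Q + b * Real.log cM) := by
        simp only [hQdef]
        linarith [e1.1, e1.2, e2.1, e2.2, e3.1, e3.2, e4.1, e4.2, e5.1, e5.2]
      calc m₂ = Real.exp (Real.log m₂) := (Real.exp_log hm₂pos).symm
        _ ≤ Real.exp (Real.log m₁ + (Q + b * Real.log cM)) := Real.exp_le_exp.mpr hlog2
        _ = Real.exp (Q + b * Real.log cM) * m₁ := by
            rw [Real.exp_add, Real.exp_log hm₁pos]; ring
    -- contradiction with the choice of `M`
    have hrpow : Real.exp (Q + b * Real.log cM) = Real.exp Q * cM ^ b := by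
      rw [Real.exp_add, Real.rpow_def_of_pos hcM0]
      ring_nf
    have hfinal : (M : ℝ) * (m₁ / lam) ≤ Real.exp Q * cM ^ b * m₁ := by
      rw [← hrpow]; linarith
    have : (M : ℝ) ≤ lam * Real.exp Q * cM ^ b := by
      have h1 : (M : ℝ) * m₁ ≤ lam * (Real.exp Q * cM ^ b * m₁) := by
        have := mul_le_mul_of_nonneg_left hfinal (le_of_lt hlam0)
        calc (M : ℝ) * m₁ = lam * ((M : ℝ) * (m₁ / lam)) := by field_simp
          _ ≤ lam * (Real.exp Q * cM ^ b * m₁) := this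
      have h2 : (M : ℝ) * m₁ ≤ lam * Real.exp Q * cM ^ b * m₁ := by linarith [h1]
      exact le_of_mul_le_mul_right (by linarith [h2]) hm₁pos
    linarith
  · -- separation
    have hsep2 : ENNReal.ofReal (2 * r) ≤ setDistE E (A \ E) := by
      simp only [setDistE]
      refine le_iInf fun a => le_iInf fun ha => le_iInf fun bb => le_iInf fun hbb => ?_
      have hbbA : bb ∈ A := hbb.1
      have hbbE : bb ∉ E := hbb.2
      have hd : 2 * r < dist a bb := by
        by_contra h
        push_neg at h
        exact hbbE (hclose a ha bb hbbA h)
      rw [edist_dist]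
      exact ENNReal.ofReal_le_ofReal (le_of_lt hd)
    refine lt_of_lt_of_le ?_ hsep2
    rw [ENNReal.ofReal_lt_ofReal_iff (by linarith)]
    linarith

end
end

section
/- Let A be a homogeneous set with measure μ and fix x ∈ A. Then, as r, r' → 0, one has log r'/log r → 1 if and only if log μ(B(x,r'))/log μ(B(x,r)) → 1; precisely: for every ε > 0 there exists η > 0 such that whenever 0 < r, r' < η and |log r'/log r − 1| < η then |log μ(B(x,r'))/log μ(B(x,r)) − 1| < ε, and conversely, whenever 0 < r, r' < η and |log μ(B(x,r'))/log μ(B(x,r)) − 1| < η then |log r'/log r − 1| < ε. -/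
open scoped ENNReal

noncomputable section

open Filter MeasureTheory

private lemma iterBound (φ : ℝ → ℝ) (kappa del Del D : ℝ)
    (hκ0 : 0 < kappa) (hκ1 : kappa < 1) (hdel : 0 < del) (hDel : 0 < Del)
    (hlow : ∀ r : ℝ, 0 < r → r ≤ D → del * φ (kappa * r) ≤ φ r)
    (hup : ∀ r : ℝ, 0 < r → r ≤ D → φ r ≤ Del * φ (kappa * r)) :
    ∀ (k : ℕ) (r : ℝ), 0 < r → r ≤ D →
      del ^ k * φ (kappa ^ k * r) ≤ φ r ∧ φ r ≤ Del ^ k * φ (kappa ^ k * r) := by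
  intro k
  induction k with
  | zero => intro r hr hrD; simp
  | succ k ih =>
    intro r hr hrD
    have hkr : 0 < kappa ^ k * r := by positivity
    have hkpow : kappa ^ k ≤ 1 := pow_le_one₀ hκ0.le hκ1.le
    have hkrD : kappa ^ k * r ≤ D := (mul_le_of_le_one_left hr.le hkpow).trans hrD
    have h1 := hlow (kappa ^ k * r) hkr hkrD
    have h2 := hup (kappa ^ k * r) hkr hkrD
    obtain ⟨ih1, ih2⟩ := ih r hr hrD
    have heq : kappa ^ (k + 1) * r = kappa * (kappa ^ k * r) := by ring
    constructor
    · have h3 : del ^ (k + 1) * φ (kappa ^ (k + 1) * r)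
          = del ^ k * (del * φ (kappa * (kappa ^ k * r))) := by rw [heq]; ring
      rw [h3]
      exact le_trans (mul_le_mul_of_nonneg_left h1 (by positivity)) ih1
    · have h3 : Del ^ (k + 1) * φ (kappa ^ (k + 1) * r)
          = Del ^ k * (Del * φ (kappa * (kappa ^ k * r))) := by rw [heq]; ring
      rw [h3]
      exact le_trans ih2 (mul_le_mul_of_nonneg_left h2 (by positivity))

private lemma keyBound (φ : ℝ → ℝ) (kappa del Del D : ℝ)
    (hκ0 : 0 < kappa) (hκ1 : kappa < 1) (hdel : 1 < del) (hdD : del ≤ Del)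
    (hpos : ∀ r : ℝ, 0 < r → 0 < φ r)
    (hmono : ∀ s r : ℝ, 0 < s → s ≤ r → φ s ≤ φ r)
    (hlow : ∀ r : ℝ, 0 < r → r ≤ D → del * φ (kappa * r) ≤ φ r)
    (hup : ∀ r : ℝ, 0 < r → r ≤ D → φ r ≤ Del * φ (kappa * r)) :
    ∀ s r : ℝ, 0 < s → s ≤ r → r ≤ D →
      Real.log del / (-Real.log kappa) * (Real.log r - Real.log s) - Real.log Del
        ≤ Real.log (φ r) - Real.log (φ s) ∧
      Real.log (φ r) - Real.log (φ s)
        ≤ Real.log Del / (-Real.log kappa) * (Real.log r - Real.log s) + Real.log Del := by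
  intro s r hs hsr hrD
  have hr : 0 < r := hs.trans_le hsr
  have hL : 0 < -Real.log kappa := by
    have := Real.log_neg hκ0 hκ1; linarith
  have hu : 0 ≤ Real.log r - Real.log s := by
    have := Real.log_le_log hs hsr
    linarith
  have hld : 0 < Real.log del := Real.log_pos hdel
  have hlD : 0 < Real.log Del := Real.log_pos (lt_of_lt_of_le hdel hdD)
  have hiter := iterBound φ kappa del Del D hκ0 hκ1 (by linarith) (by linarith) hlow hup
  set L := -Real.log kappa with hLdef
  set u := Real.log r - Real.log s with hudef
  constructor
  · -- lower bound
    set k := ⌊u / L⌋₊ with hkdef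
    have hk1 : (k : ℝ) ≤ u / L := Nat.floor_le (by positivity)
    have hk2 : u / L - 1 < (k : ℝ) := Nat.sub_one_lt_floor _
    have hkL : (k : ℝ) * L ≤ u := (le_div_iff₀ hL).mp hk1
    have hpow : 0 < kappa ^ k * r := by positivity
    have hsk : s ≤ kappa ^ k * r := by
      have hlog : Real.log s ≤ Real.log (kappa ^ k * r) := by
        rw [Real.log_mul (by positivity) hr.ne', Real.log_pow]
        have : (k : ℝ) * Real.log kappa = -((k : ℝ) * L) := by rw [hLdef]; ring
        rw [this]
        linarith
      exact (Real.log_le_log_iff hs hpow).mp hlog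
    have hφs : φ s ≤ φ (kappa ^ k * r) := hmono s _ hs hsk
    have hiter1 := (hiter k r hr hrD).1
    have hmul : del ^ k * φ s ≤ φ r :=
      le_trans (mul_le_mul_of_nonneg_left hφs (by positivity)) hiter1
    have hlogmul : Real.log (del ^ k * φ s) ≤ Real.log (φ r) :=
      Real.log_le_log (mul_pos (pow_pos (by linarith : (0:ℝ) < del) k) (hpos s hs)) hmul
    rw [Real.log_mul (by positivity) (hpos s hs).ne', Real.log_pow] at hlogmul
    have hexp : Real.log del / L * u = Real.log del * (u / L) := by ring
    have h4 : Real.log del * (u / L) ≤ Real.log del * ((k : ℝ) + 1) :=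
      mul_le_mul_of_nonneg_left (by linarith) hld.le
    have h5 : Real.log del ≤ Real.log Del := Real.log_le_log (by linarith) hdD
    rw [hexp]
    nlinarith
  · -- upper
    set k := ⌈u / L⌉₊ with hkdef
    have hk1 : u / L ≤ (k : ℝ) := Nat.le_ceil _
    have hk2 : (k : ℝ) < u / L + 1 := Nat.ceil_lt_add_one (by positivity)
    have hkL : u ≤ (k : ℝ) * L := (div_le_iff₀ hL).mp hk1
    have hpow : 0 < kappa ^ k * r := by positivity
    have hsk : kappa ^ k * r ≤ s := by
      have hlog : Real.log (kappa ^ k * r) ≤ Real.log s := by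
        rw [Real.log_mul (by positivity) hr.ne', Real.log_pow]
        have : (k : ℝ) * Real.log kappa = -((k : ℝ) * L) := by rw [hLdef]; ring
        rw [this]
        linarith
      exact (Real.log_le_log_iff hpow hs).mp hlog
    have hφs : φ (kappa ^ k * r) ≤ φ s := hmono _ s hpow hsk
    have hiter2 := (hiter k r hr hrD).2
    have hmul : φ r ≤ Del ^ k * φ s :=
      le_trans hiter2 (mul_le_mul_of_nonneg_left hφs (pow_pos (by linarith : (0:ℝ) < Del) k).le)
    have hlogmul : Real.log (φ r) ≤ Real.log (Del ^ k * φ s) :=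
      Real.log_le_log (hpos r hr) hmul
    rw [Real.log_mul (pow_pos (by linarith : (0:ℝ) < Del) k).ne' (hpos s hs).ne', Real.log_pow] at hlogmul
    have hexp : Real.log Del / L * u = Real.log Del * (u / L) := by ring
    have h4 : Real.log Del * (k : ℝ) ≤ Real.log Del * (u / L + 1) :=
      mul_le_mul_of_nonneg_left hk2.le hlD.le
    rw [hexp]
    nlinarith

private lemma mainAbstract (φ : ℝ → ℝ) (kappa del Del D : ℝ)
    (hκ0 : 0 < kappa) (hκ1 : kappa < 1) (hdel : 1 < del) (hdD : del ≤ Del) (hD : 0 < D)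
    (hpos : ∀ r : ℝ, 0 < r → 0 < φ r) (hle1 : ∀ r : ℝ, 0 < r → φ r ≤ 1)
    (hmono : ∀ s r : ℝ, 0 < s → s ≤ r → φ s ≤ φ r)
    (hlow : ∀ r : ℝ, 0 < r → r ≤ D → del * φ (kappa * r) ≤ φ r)
    (hup : ∀ r : ℝ, 0 < r → r ≤ D → φ r ≤ Del * φ (kappa * r)) :
    ∀ ε : ℝ, 0 < ε → ∃ η : ℝ, 0 < η ∧
      (∀ r r' : ℝ, 0 < r → r < η → 0 < r' → r' < η →
        |Real.log r' / Real.log r - 1| < η →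
        |Real.log (φ r') / Real.log (φ r) - 1| < ε) ∧
      (∀ r r' : ℝ, 0 < r → r < η → 0 < r' → r' < η →
        |Real.log (φ r') / Real.log (φ r) - 1| < η →
        |Real.log r' / Real.log r - 1| < ε) := by
  intro ε hε
  have hL : 0 < -Real.log kappa := by
    have := Real.log_neg hκ0 hκ1; linarith
  set L := -Real.log kappa with hLdef
  have hld : 0 < Real.log del := Real.log_pos hdel
  have hlD : 0 < Real.log Del := Real.log_pos (lt_of_lt_of_le hdel hdD)
  set a := Real.log del / L with hadef
  set b := Real.log Del / L with hbdef
  set C := Real.log Del with hCdef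
  have ha : 0 < a := by positivity
  have hb : 0 < b := by positivity
  have hC : 0 < C := hlD
  have hab : a ≤ b := by
    have h5 : Real.log del ≤ Real.log Del := Real.log_le_log (by linarith) hdD
    exact (div_le_div_iff_of_pos_right hL).mpr h5
  have key := keyBound φ kappa del Del D hκ0 hκ1 hdel hdD hpos hmono hlow hup
  have keyabs : ∀ r r' : ℝ, 0 < r → r ≤ D → 0 < r' → r' ≤ D →
      a * |Real.log r' - Real.log r| - C ≤ |Real.log (φ r') - Real.log (φ r)| ∧
      |Real.log (φ r') - Real.log (φ r)| ≤ b * |Real.log r' - Real.log r| + C := by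
    intro r r' hr hrD hr' hr'D
    rcases le_total r r' with h | h
    · have hk := key r r' hr h hr'D
      have h1 : Real.log r ≤ Real.log r' := Real.log_le_log hr h
      have h2 : Real.log (φ r) ≤ Real.log (φ r') :=
        Real.log_le_log (hpos r hr) (hmono r r' hr h)
      rw [abs_of_nonneg (by linarith : (0:ℝ) ≤ Real.log r' - Real.log r),
        abs_of_nonneg (by linarith : (0:ℝ) ≤ Real.log (φ r') - Real.log (φ r))]
      exact ⟨hk.1, hk.2⟩
    · have hk := key r' r hr' h hrD
      have h1 : Real.log r' ≤ Real.log r := Real.log_le_log hr' h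
      have h2 : Real.log (φ r') ≤ Real.log (φ r) :=
        Real.log_le_log (hpos r' hr') (hmono r' r hr' h)
      rw [abs_sub_comm (Real.log r') (Real.log r),
        abs_sub_comm (Real.log (φ r')) (Real.log (φ r)),
        abs_of_nonneg (by linarith : (0:ℝ) ≤ Real.log r - Real.log r'),
        abs_of_nonneg (by linarith : (0:ℝ) ≤ Real.log (φ r) - Real.log (φ r'))]
      exact ⟨hk.1, hk.2⟩
  set E₁ := a * Real.log D - C - Real.log (φ D) with hE1def
  set E₂ := b * Real.log D + C - Real.log (φ D) with hE2def
  have psi_lb : ∀ r : ℝ, 0 < r → r ≤ D →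
      a * (-Real.log r) + E₁ ≤ -Real.log (φ r) := by
    intro r hr hrD
    have hk := (key r D hr hrD le_rfl).1
    have hexp : a * (Real.log D - Real.log r) = a * Real.log D - a * Real.log r := by ring
    rw [hexp] at hk
    rw [hE1def]; linarith
  have psi_ub : ∀ r : ℝ, 0 < r → r ≤ D →
      -Real.log (φ r) ≤ b * (-Real.log r) + E₂ := by
    intro r hr hrD
    have hk := (key r D hr hrD le_rfl).2
    have hexp : b * (Real.log D - Real.log r) = b * Real.log D - b * Real.log r := by ring
    rw [hexp] at hk
    rw [hE2def]; linarith
  set T := max (max (2 * |E₁| / a) (|E₂| / b)) (8 * C / (a * ε)) with hTdef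
  have hT0 : 0 < T := lt_of_lt_of_le (by positivity) (le_max_right _ _)
  set η := min (min (a * ε / (4 * b)) (Real.exp (-T))) D with hηdef
  have hη0 : 0 < η := by positivity
  have hηab : η ≤ a * ε / (4 * b) := le_trans (min_le_left _ _) (min_le_left _ _)
  have basic : ∀ r : ℝ, 0 < r → r < η →
      T < -Real.log r ∧ r ≤ D ∧ a * (-Real.log r) / 2 ≤ -Real.log (φ r) ∧
      -Real.log (φ r) ≤ 2 * b * (-Real.log r) := by
    intro r hr hrη
    have hrD : r ≤ D := le_of_lt (lt_of_lt_of_le hrη (min_le_right _ _))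
    have hrexp : r < Real.exp (-T) :=
      lt_of_lt_of_le hrη (le_trans (min_le_left _ _) (min_le_right _ _))
    have hM : T < -Real.log r := by
      have := Real.log_lt_log hr hrexp
      rw [Real.log_exp] at this; linarith
    have hMpos : 0 < -Real.log r := lt_trans hT0 hM
    have h1 : 2 * |E₁| / a ≤ T := le_trans (le_max_left _ _) (le_max_left _ _)
    have h2 : |E₂| / b ≤ T := le_trans (le_max_right _ _) (le_max_left _ _)
    have hE1 : |E₁| ≤ a * (-Real.log r) / 2 := by
      rw [div_le_iff₀ ha] at h1
      nlinarith
    have hE2 : |E₂| ≤ b * (-Real.log r) := by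
      rw [div_le_iff₀ hb] at h2
      nlinarith
    refine ⟨hM, hrD, ?_, ?_⟩
    · have := psi_lb r hr hrD
      have := neg_abs_le E₁
      linarith
    · have := psi_ub r hr hrD
      have := le_abs_self E₂
      linarith
  clear_value L a b C E₁ E₂ T η
  refine ⟨η, hη0, ?_, ?_⟩
  · intro r r' hr hrη hr' hr'η hlog
    obtain ⟨hMr, hrD, hlb, hub⟩ := basic r hr hrη
    obtain ⟨hMr', hr'D, hlb', hub'⟩ := basic r' hr' hr'η
    set M := -Real.log r with hMdef
    clear_value M
    have hMpos : 0 < M := lt_trans hT0 hMr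
    have hMεC : 8 * C < a * ε * M := by
      have h3 : 8 * C / (a * ε) ≤ T := by rw [hTdef]; exact le_max_right _ _
      rw [div_le_iff₀ (by positivity)] at h3
      have h4 : a * ε * T < a * ε * M := mul_lt_mul_of_pos_left hMr (by positivity)
      linarith
    have hlogr_ne : Real.log r ≠ 0 := by
      intro h; rw [hMdef, h] at hMpos; simp at hMpos
    have hurw : |Real.log r' - Real.log r| = |Real.log r| * |Real.log r' / Real.log r - 1| := by
      rw [← abs_mul, mul_sub, mul_div_cancel₀ _ hlogr_ne, mul_one]
    have habsM : |Real.log r| = M := by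
      rw [hMdef, abs_of_neg (by linarith : Real.log r < 0)]
    have hu : |Real.log r' - Real.log r| < M * (a * ε / (4 * b)) := by
      rw [hurw, habsM]
      exact mul_lt_mul_of_pos_left (lt_of_lt_of_le hlog hηab) hMpos
    have hψr_pos : 0 < -Real.log (φ r) := lt_of_lt_of_le (by positivity) hlb
    have hψr_ne : Real.log (φ r) ≠ 0 := by intro h; rw [h] at hψr_pos; simp at hψr_pos
    have hka := (keyabs r r' hr hrD hr' hr'D).2
    rw [div_sub_one hψr_ne, abs_div, abs_of_neg (by linarith : Real.log (φ r) < 0)]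
    rw [div_lt_iff₀ hψr_pos]
    have hbu : b * |Real.log r' - Real.log r| ≤ b * (M * (a * ε / (4 * b))) :=
      mul_le_mul_of_nonneg_left hu.le hb.le
    have heq1 : b * (M * (a * ε / (4 * b))) = a * ε * M / 4 := by
      field_simp
    have hmono2 : ε * (a * M / 2) ≤ ε * (-Real.log (φ r)) :=
      mul_le_mul_of_nonneg_left (by linarith) hε.le
    have heq2 : ε * (a * M / 2) = a * ε * M / 2 := by ring
    rw [heq2] at hmono2
    rw [heq1] at hbu
    linarith
  · intro r r' hr hrη hr' hr'η hlog
    obtain ⟨hMr, hrD, hlb, hub⟩ := basic r hr hrη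
    obtain ⟨hMr', hr'D, hlb', hub'⟩ := basic r' hr' hr'η
    set M := -Real.log r with hMdef
    clear_value M
    have hMpos : 0 < M := lt_trans hT0 hMr
    have hMεC : 8 * C < a * ε * M := by
      have h3 : 8 * C / (a * ε) ≤ T := by rw [hTdef]; exact le_max_right _ _
      rw [div_le_iff₀ (by positivity)] at h3
      have h4 : a * ε * T < a * ε * M := mul_lt_mul_of_pos_left hMr (by positivity)
      linarith
    have hψr_pos : 0 < -Real.log (φ r) := lt_of_lt_of_le (by positivity) hlb
    have hψr_ne : Real.log (φ r) ≠ 0 := by intro h; rw [h] at hψr_pos; simp at hψr_pos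
    have hXYrw : |Real.log (φ r') - Real.log (φ r)|
        = |Real.log (φ r)| * |Real.log (φ r') / Real.log (φ r) - 1| := by
      rw [← abs_mul, mul_sub, mul_div_cancel₀ _ hψr_ne, mul_one]
    have habsψ : |Real.log (φ r)| = -Real.log (φ r) :=
      abs_of_neg (by linarith : Real.log (φ r) < 0)
    have hXY : |Real.log (φ r') - Real.log (φ r)| < (-Real.log (φ r)) * η := by
      rw [hXYrw, habsψ]
      exact mul_lt_mul_of_pos_left hlog hψr_pos
    have hXY2 : (-Real.log (φ r)) * η ≤ (2 * b * M) * η :=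
      mul_le_mul_of_nonneg_right hub hη0.le
    have hXY3 : (2 * b * M) * η ≤ (2 * b * M) * (a * ε / (4 * b)) :=
      mul_le_mul_of_nonneg_left hηab (by positivity)
    have heq1 : (2 * b * M) * (a * ε / (4 * b)) = a * ε * M / 2 := by
      field_simp
      ring
    have hka := (keyabs r r' hr hrD hr' hr'D).1
    have hau : a * |Real.log r' - Real.log r| < a * ε * M / 2 + C := by
      rw [heq1] at hXY3
      linarith
    have hulM : |Real.log r' - Real.log r| < ε * M := by
      have h7 : a * (ε * M) = a * ε * M := by ring
      have h6 : a * |Real.log r' - Real.log r| < a * (ε * M) := by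
        rw [h7]; linarith
      exact lt_of_mul_lt_mul_left h6 ha.le
    have hlogr_ne : Real.log r ≠ 0 := by
      intro h; rw [hMdef, h] at hMpos; simp at hMpos
    have habsM : |Real.log r| = M := by
      rw [hMdef, abs_of_neg (by linarith : Real.log r < 0)]
    have hurw : |Real.log r' - Real.log r| = M * |Real.log r' / Real.log r - 1| := by
      rw [← habsM, ← abs_mul, mul_sub, mul_div_cancel₀ _ hlogr_ne, mul_one]
    rw [hurw] at hulM
    have := (mul_lt_mul_iff_right₀ hMpos).mp (by linarith [hulM] : M * |Real.log r' / Real.log r - 1| < M * ε)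
    exact this

theorem statement19' {X : Type*} [MetricSpace X] [MeasurableSpace X]
    (A : Set X) (μ : Measure X) (lam kappa del Del D' : ℝ)
    (hprob : IsProbabilityMeasure μ) (hD : 0 < D') (hκ0 : 0 < kappa) (hκ1 : kappa < 1)
    (hdel : 1 < del) (hdD : del ≤ Del) (x : X)
    (hsupp : ∀ r : ℝ, 0 < r → 0 < μ (Metric.closedBall x r))
    (hlow : ∀ r : ℝ, 0 < r → r ≤ D' →
      del * (μ (Metric.closedBall x (kappa * r))).toReal ≤ (μ (Metric.closedBall x r)).toReal)
    (hup : ∀ r : ℝ, 0 < r → r ≤ D' →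
      (μ (Metric.closedBall x r)).toReal ≤ Del * (μ (Metric.closedBall x (kappa * r))).toReal) :
    ∀ ε : ℝ, 0 < ε → ∃ η : ℝ, 0 < η ∧
      (∀ r r' : ℝ, 0 < r → r < η → 0 < r' → r' < η →
        |Real.log r' / Real.log r - 1| < η →
        |Real.log (μ (Metric.closedBall x r')).toReal /
          Real.log (μ (Metric.closedBall x r)).toReal - 1| < ε) ∧
      (∀ r r' : ℝ, 0 < r → r < η → 0 < r' → r' < η →
        |Real.log (μ (Metric.closedBall x r')).toReal /
          Real.log (μ (Metric.closedBall x r)).toReal - 1| < η →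
        |Real.log r' / Real.log r - 1| < ε) := by
  intro ε hε
  exact mainAbstract (fun r => (μ (Metric.closedBall x r)).toReal)
    kappa del Del D' hκ0 hκ1 hdel hdD hD
    (fun r hr => ENNReal.toReal_pos (hsupp r hr).ne' (measure_ne_top μ _))
    (fun r _ => by
      have h1 : μ (Metric.closedBall x r) ≤ 1 := prob_le_one
      simpa using (ENNReal.toReal_le_toReal (measure_ne_top μ _) ENNReal.one_ne_top).mpr h1)
    (fun s r _ hsr => ENNReal.toReal_mono (measure_ne_top μ _)
      (measure_mono (Metric.closedBall_subset_closedBall hsr)))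
    hlow hup ε hε

/-- For a homogeneous set `A` and `x ∈ A`: as `r, r' → 0`,
`log r'/log r → 1` if and only if `log μ(B(x,r'))/log μ(B(x,r)) → 1`. -/
theorem statement19 {X : Type*} [MetricSpace X] [MeasurableSpace X] [BorelSpace X]
    (A : Set X) (μ : Measure X) (lam kappa del Del : ℝ)
    (hA : IsHomog A μ lam kappa del Del) (x : X) (hx : x ∈ A) :
    ∀ ε : ℝ, 0 < ε → ∃ η : ℝ, 0 < η ∧
      (∀ r r' : ℝ, 0 < r → r < η → 0 < r' → r' < η →
        |Real.log r' / Real.log r - 1| < η →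
        |Real.log (μ (Metric.closedBall x r')).toReal /
          Real.log (μ (Metric.closedBall x r)).toReal - 1| < ε) ∧
      (∀ r r' : ℝ, 0 < r → r < η → 0 < r' → r' < η →
        |Real.log (μ (Metric.closedBall x r')).toReal /
          Real.log (μ (Metric.closedBall x r)).toReal - 1| < η →
        |Real.log r' / Real.log r - 1| < ε) := by
  intro ε hε
  exact statement19' A μ lam kappa del Del (Metric.diam A) hA.prob hA.diam_pos
    hA.kappa_pos hA.kappa_lt_one hA.one_lt_del hA.del_le_Del x
    (fun r hr => hA.supp_pos x hx r hr)
    (fun r hr hrD => hA.scale_lower x hx r hr hrD)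
    (fun r hr hrD => hA.scale_upper x hx r hr hrD) ε hε

end
end
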